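/- arXiv:math/0310297 — 4 statements merged into one kernel-verified Lean document; each statement's English description precedes it below -/
import Mathlib

section
/- Let q ∈ (0,1) and define β : ℕ → ℝ by β_0 = 1 and, for k ≥ 1, β_k = (1/k) Σ_{ℓ=1}^k (−1)^{ℓ+1} (q^ℓ/(1−q^ℓ)) β_{k−ℓ}. Then for every real s, the series Σ_{k=0}^∞ β_k s^k converges and equals the convergent infinite product ∏_{k=1}^∞ (1 + q^k s). -/
/-!
Let `c_k = ∏_{1 ≤ j ≤ k} q^j / (1 - q^j)` and `F = ∑ c_k X^k`, so that coefficientwise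
`F(X) = (1 + qX) F(qX)`. The recursion for `β` is the coefficient form of `F' = L F`, where `L` is
the power series of the logarithmic derivative `∑_j q^j / (1 + q^j X)` of the product. The
functional equations of `F` and `L` give `F' - L F = q (1 + qX) (F' - L F)(qX)`, which forces
`F' = L F`; hence `β = c`. Analytically,
`∑ c_k s^k = (∏_{1 ≤ j ≤ n} (1 + q^j s)) ∑ c_k (q^n s)^k`, and the last factor tends to `c_0 = 1`
by dominated convergence.
-/

namespace EulerProduct

open Filter Topology PowerSeries Finset

section Algebra

variable {K : Type*} [Field K] (q : K)

def eulerCoeff (k : ℕ) : K := ∏ j ∈ range k, q ^ (j + 1) / (1 - q ^ (j + 1))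

@[simp] lemma eulerCoeff_zero : eulerCoeff q 0 = 1 := by simp [eulerCoeff]

lemma eulerCoeff_succ (k : ℕ) :
    eulerCoeff q (k + 1) = eulerCoeff q k * (q ^ (k + 1) / (1 - q ^ (k + 1))) :=
  prod_range_succ _ k

lemma one_sub_pow_mul_eulerCoeff_succ {k : ℕ} (hq : q ^ (k + 1) ≠ 1) :
    (1 - q ^ (k + 1)) * eulerCoeff q (k + 1) = q ^ (k + 1) * eulerCoeff q k := by
  rw [eulerCoeff_succ]
  field_simp [sub_ne_zero.mpr hq.symm]

def eulerSeries : K⟦X⟧ := mk (eulerCoeff q)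

def logDerivSeries : K⟦X⟧ := mk fun i ↦ (-1) ^ i * (q ^ (i + 1) / (1 - q ^ (i + 1)))

lemma coeff_zero_one_add_C_mul_X_mul (f : K⟦X⟧) :
    coeff 0 ((1 + C q * X) * f) = coeff 0 f := by
  simp [add_mul, mul_assoc]

lemma coeff_succ_one_add_C_mul_X_mul (f : K⟦X⟧) (n : ℕ) :
    coeff (n + 1) ((1 + C q * X) * f) = coeff (n + 1) f + q * coeff n f := by
  rw [add_mul, one_mul, mul_assoc, map_add, coeff_C_mul, coeff_succ_X_mul]

lemma eulerSeries_eq_mul_rescale (hq : ∀ k, q ^ (k + 1) ≠ 1) :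
    eulerSeries q = (1 + C q * X) * rescale q (eulerSeries q) := by
  ext (_ | n)
  · simp [coeff_zero_one_add_C_mul_X_mul, eulerSeries]
  · rw [coeff_succ_one_add_C_mul_X_mul]
    simp only [eulerSeries, coeff_rescale, coeff_mk]
    linear_combination one_sub_pow_mul_eulerCoeff_succ q (hq n)

lemma mul_sub_rescale_logDerivSeries (hq : ∀ k, q ^ (k + 1) ≠ 1) :
    (1 + C q * X) * (logDerivSeries q - C q * rescale q (logDerivSeries q)) = C q := by
  have hL (i : ℕ) : coeff i (logDerivSeries q - C q * rescale q (logDerivSeries q))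
      = (-1) ^ i * q ^ (i + 1) := by
    simp only [logDerivSeries, map_sub, coeff_C_mul, coeff_rescale, coeff_mk]
    field_simp [sub_ne_zero.mpr (hq i).symm]
    ring
  ext (_ | n)
  · simp [coeff_zero_one_add_C_mul_X_mul, hL]
  · rw [coeff_succ_one_add_C_mul_X_mul, hL, hL, coeff_C, if_neg n.succ_ne_zero]
    ring

lemma derivative_rescale {R : Type*} [CommSemiring R] (a : R) (f : R⟦X⟧) :
    d⁄dX R (rescale a f) = C a * rescale a (d⁄dX R f) := by
  ext n
  simp only [coeff_derivative, coeff_rescale, coeff_C_mul]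
  ring

lemma eq_zero_of_eq_C_mul_mul_rescale (hq : ∀ k, q ^ (k + 1) ≠ 1) {f : K⟦X⟧}
    (hf : f = C q * ((1 + C q * X) * rescale q f)) : f = 0 := by
  ext n
  rw [map_zero]
  induction n with
  | zero =>
    have h := congr_arg (coeff 0) hf
    rw [coeff_C_mul, coeff_zero_one_add_C_mul_X_mul, coeff_rescale] at h
    have h' : (1 - q ^ (0 + 1)) * coeff 0 f = 0 := by linear_combination h
    exact (mul_eq_zero.mp h').resolve_left (sub_ne_zero.mpr (hq 0).symm)
  | succ n ih =>
    have h := congr_arg (coeff (n + 1)) hf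
    rw [coeff_C_mul, coeff_succ_one_add_C_mul_X_mul, coeff_rescale, coeff_rescale, ih] at h
    have h' : (1 - q ^ (n + 1 + 1)) * coeff (n + 1) f = 0 := by linear_combination h
    exact (mul_eq_zero.mp h').resolve_left (sub_ne_zero.mpr (hq _).symm)

theorem derivative_eulerSeries (hq : ∀ k, q ^ (k + 1) ≠ 1) :
    d⁄dX K (eulerSeries q) = logDerivSeries q * eulerSeries q := by
  have hF := eulerSeries_eq_mul_rescale q hq
  set F := eulerSeries q
  set L := logDerivSeries q
  have hdF : d⁄dX K F = C q * rescale q F + (1 + C q * X) * (C q * rescale q (d⁄dX K F)) := by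
    conv_lhs => rw [hF]
    simp only [Derivation.leibniz, derivative_rescale, map_add, derivative_one, derivative_C,
      derivative_X, smul_eq_mul]
    ring
  have hL := mul_sub_rescale_logDerivSeries q hq
  rw [← sub_eq_zero]
  apply eq_zero_of_eq_C_mul_mul_rescale q hq
  rw [map_sub, map_mul]
  linear_combination hdF - rescale q F * hL - L * hF

lemma succ_mul_eulerCoeff_succ (hq : ∀ k, q ^ (k + 1) ≠ 1) (k : ℕ) :
    (k + 1) * eulerCoeff q (k + 1) = ∑ ℓ ∈ Icc 1 (k + 1),
      (-1) ^ (ℓ + 1) * (q ^ ℓ / (1 - q ^ ℓ)) * eulerCoeff q (k + 1 - ℓ) := by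
  have h := congr_arg (coeff k) (derivative_eulerSeries q hq)
  simp only [coeff_derivative, coeff_mul, Nat.sum_antidiagonal_eq_sum_range_succ_mk, eulerSeries,
    logDerivSeries, coeff_mk] at h
  rw [← Ico_add_one_right_eq_Icc, sum_Ico_eq_sum_range, add_tsub_cancel_right, mul_comm, h]
  refine sum_congr rfl fun i _ ↦ ?_
  rw [show k + 1 - (1 + i) = k - i by omega, add_comm 1 i]
  ring

lemma eq_eulerCoeff_of_recursion [CharZero K] (hq : ∀ k, q ^ (k + 1) ≠ 1) {β : ℕ → K}
    (hβ0 : β 0 = 1)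
    (hβ : ∀ k : ℕ, 1 ≤ k →
      β k = (1 / (k : K)) *
        ∑ ℓ ∈ Icc 1 k, (-1 : K) ^ (ℓ + 1) * (q ^ ℓ / (1 - q ^ ℓ)) * β (k - ℓ)) :
    β = eulerCoeff q := by
  funext k
  induction k using Nat.strong_induction_on with
  | _ k ih =>
    match k with
    | 0 => rw [hβ0, eulerCoeff_zero]
    | k + 1 =>
      rw [hβ (k + 1) k.succ_pos, sum_congr rfl fun ℓ hℓ ↦ by rw [ih (k + 1 - ℓ) (by grind)],
        ← succ_mul_eulerCoeff_succ q hq]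
      field_simp
      push_cast
      ring

end Algebra

section Real

variable {q : ℝ}

lemma pow_succ_ne_one (hq0 : 0 < q) (hq1 : q < 1) (k : ℕ) : q ^ (k + 1) ≠ 1 :=
  (pow_lt_one₀ hq0.le hq1 k.succ_ne_zero).ne

lemma summable_eulerCoeff_mul_pow (hq0 : 0 < q) (hq1 : q < 1) (s : ℝ) :
    Summable fun k ↦ eulerCoeff q k * s ^ k := by
  have hpow : Tendsto (fun n : ℕ ↦ q ^ (n + 1)) atTop (𝓝 0) :=
    (tendsto_pow_atTop_nhds_zero_of_lt_one hq0.le hq1).comp (tendsto_add_atTop_nat 1)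
  have hratio : Tendsto (fun n : ℕ ↦ q ^ (n + 1) / (1 - q ^ (n + 1)) * |s|) atTop (𝓝 0) := by
    simpa using
      (hpow.div (tendsto_const_nhds.sub hpow) (by norm_num : (1 : ℝ) - 0 ≠ 0)).mul_const |s|
  refine summable_of_ratio_norm_eventually_le one_half_lt_one ?_
  filter_upwards [hratio.eventually_lt_const one_half_pos] with n hn
  have ha : 0 ≤ q ^ (n + 1) / (1 - q ^ (n + 1)) :=
    div_nonneg (pow_nonneg hq0.le _) (sub_nonneg.mpr (pow_le_one₀ hq0.le hq1.le))
  have hstep : eulerCoeff q (n + 1) * s ^ (n + 1)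
      = q ^ (n + 1) / (1 - q ^ (n + 1)) * s * (eulerCoeff q n * s ^ n) := by
    rw [eulerCoeff_succ]
    ring
  rw [hstep, norm_mul, norm_mul, Real.norm_of_nonneg ha, Real.norm_eq_abs s]
  gcongr

lemma tsum_eulerCoeff_mul_pow_eq (hq0 : 0 < q) (hq1 : q < 1) (s : ℝ) :
    ∑' k, eulerCoeff q k * s ^ k = (1 + q * s) * ∑' k, eulerCoeff q k * (q * s) ^ k := by
  have hs := summable_eulerCoeff_mul_pow hq0 hq1 s
  have hqs := summable_eulerCoeff_mul_pow hq0 hq1 (q * s)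
  have hdiff : ∑' k, (eulerCoeff q k * s ^ k - eulerCoeff q k * (q * s) ^ k)
      = q * s * ∑' k, eulerCoeff q k * (q * s) ^ k := by
    rw [(hs.sub hqs).tsum_eq_zero_add, ← tsum_mul_left]
    simp only [pow_zero, mul_one, sub_self, zero_add]
    refine tsum_congr fun k ↦ ?_
    linear_combination s ^ (k + 1) * one_sub_pow_mul_eulerCoeff_succ q (pow_succ_ne_one hq0 hq1 k)
  rw [hs.tsum_sub hqs] at hdiff
  linear_combination hdiff

lemma tsum_eulerCoeff_mul_pow_eq_prod_mul (hq0 : 0 < q) (hq1 : q < 1) (s : ℝ) (n : ℕ) :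
    ∑' k, eulerCoeff q k * s ^ k
      = (∏ j ∈ range n, (1 + q ^ (j + 1) * s)) * ∑' k, eulerCoeff q k * (q ^ n * s) ^ k := by
  induction n with
  | zero => simp
  | succ n ih =>
    rw [ih, tsum_eulerCoeff_mul_pow_eq hq0 hq1, prod_range_succ, ← mul_assoc q, ← pow_succ']
    ring

lemma tendsto_tsum_eulerCoeff_mul_pow (hq0 : 0 < q) (hq1 : q < 1) (s : ℝ) :
    Tendsto (fun n : ℕ ↦ ∑' k, eulerCoeff q k * (q ^ n * s) ^ k) atTop (𝓝 1) := by
  have hqn : Tendsto (fun n : ℕ ↦ q ^ n) atTop (𝓝 0) :=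
    tendsto_pow_atTop_nhds_zero_of_lt_one hq0.le hq1
  have hlim := tendsto_tsum_of_dominated_convergence (summable_eulerCoeff_mul_pow hq0 hq1 s).norm
    (fun k ↦ ((hqn.mul_const s).pow k).const_mul (eulerCoeff q k)) (Eventually.of_forall
      fun n k ↦ ?_)
  · rwa [zero_mul, tsum_eq_single 0 fun k hk ↦ by simp [hk], pow_zero, mul_one,
      eulerCoeff_zero] at hlim
  · rw [norm_mul, norm_mul, norm_pow, norm_pow, norm_mul]
    gcongr
    exact mul_le_of_le_one_left (norm_nonneg s)
      (by simpa [abs_of_pos hq0] using pow_le_one₀ hq0.le hq1.le)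

lemma multipliable_one_add_pow_succ_mul (hq0 : 0 < q) (hq1 : q < 1) (s : ℝ) :
    Multipliable fun k : ℕ ↦ 1 + q ^ (k + 1) * s :=
  Real.multipliable_one_add_of_summable
    (((summable_nat_add_iff 1).mpr (summable_geometric_of_lt_one hq0.le hq1)).mul_right s)

theorem tsum_eulerCoeff_mul_pow_eq_tprod (hq0 : 0 < q) (hq1 : q < 1) (s : ℝ) :
    ∑' k, eulerCoeff q k * s ^ k = ∏' k : ℕ, (1 + q ^ (k + 1) * s) := by
  have hprod := (multipliable_one_add_pow_succ_mul hq0 hq1 s).hasProd.tendsto_prod_nat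
  have hlim := hprod.mul (tendsto_tsum_eulerCoeff_mul_pow hq0 hq1 s)
  simp only [← tsum_eulerCoeff_mul_pow_eq_prod_mul hq0 hq1, mul_one] at hlim
  exact tendsto_nhds_unique tendsto_const_nhds hlim

end Real

end EulerProduct

/-- The recursively defined binomial-moment generating sequence has generating function
`∏_{k=1}^∞ (1 + q^k s)`. -/
theorem generating_function_product (q : ℝ) (hq : q ∈ Set.Ioo (0 : ℝ) 1)
    (β : ℕ → ℝ) (hβ0 : β 0 = 1)
    (hβ : ∀ k : ℕ, 1 ≤ k →
      β k = (1 / (k : ℝ)) *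
        ∑ ℓ ∈ Finset.Icc 1 k, (-1 : ℝ) ^ (ℓ + 1) * (q ^ ℓ / (1 - q ^ ℓ)) * β (k - ℓ)) :
    ∀ s : ℝ,
      Summable (fun k : ℕ => β k * s ^ k) ∧
      Multipliable (fun k : ℕ => 1 + q ^ (k + 1) * s) ∧
      ∑' k : ℕ, β k * s ^ k = ∏' k : ℕ, (1 + q ^ (k + 1) * s) := by
  obtain ⟨hq0, hq1⟩ := hq
  obtain rfl := EulerProduct.eq_eulerCoeff_of_recursion q
    (EulerProduct.pow_succ_ne_one hq0 hq1) hβ0 hβ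
  exact fun s ↦ ⟨EulerProduct.summable_eulerCoeff_mul_pow hq0 hq1 s,
    EulerProduct.multipliable_one_add_pow_succ_mul hq0 hq1 s,
    EulerProduct.tsum_eulerCoeff_mul_pow_eq_tprod hq0 hq1 s⟩
end

section
/- Let μ be the standard complex Gaussian measure on ℂ and μ^⊗m the product measure on ℂ^m. Let A and B be complex n×m matrices. Then ∫_{ℂ^m} ( ∏_{j=1}^n (Av)_j ) · ( ∏_{j=1}^n conj((Bv)_j) ) dμ^⊗m(v) = perm(AB*), where B* is the conjugate transpose of B; equivalently, if Z_j = (Av)_j and W_j = (Bv)_j, then E[Z_1⋯Z_n · conj(W_1)⋯conj(W_n)] = Σ_{σ ∈ S_n} ∏_{j=1}^n E[Z_j conj(W_{σ(j)})]. In particular, for jointly complex Gaussian Z_1,…,Z_n of mean zero, E|Z_1⋯Z_n|² = perm( (E Z_j conj(Z_k))_{j,k} ). -/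
/-!
Expanding both products turns the integrand into a combination of monomials
`∏ i, v (f i) * ∏ i, conj (v (g i))` with `f g : Fin n → Fin m`. The coordinates of `v` are
independent, so such a monomial integrates to `∏ k, 𝔼[z ^ a_k * conj z ^ b_k]`, where `a_k`, `b_k`
are the fibre sizes of `f`, `g` over `k`. Rotation invariance of the Gaussian kills the factors
with `a_k ≠ b_k`, and `𝔼|z|^(2a) = a!`; so the monomial integrates to `∏ k, a_k!` if all fibre
sizes agree and to `0` otherwise, which is the number of permutations `σ` with `f ∘ σ = g`.
Summing these counts against the coefficients of `A` and `B` reproduces the expansion of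
`perm (A * Bᴴ)` as a sum over permutations.
-/

open MeasureTheory Complex

/-- The standard complex Gaussian measure on `ℂ`, with density `exp (-|z|^2) / π`
with respect to Lebesgue (area) measure. -/
noncomputable def gaussianC : Measure ℂ :=
  volume.withDensity fun z => ENNReal.ofReal (Real.exp (-(‖z‖) ^ 2) / Real.pi)

open scoped ComplexConjugate Nat
open Equiv Fintype Finset Matrix

section Permanent

variable {ι κ : Type*} [Fintype ι] [Fintype κ]

theorem Matrix.prod_mulVec_eq_sum {R : Type*} [CommSemiring R] [DecidableEq ι]
    (A : Matrix ι κ R) (v : κ → R) :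
    ∏ i, (A *ᵥ v) i = ∑ f : ι → κ, (∏ i, A i (f i)) * ∏ i, v (f i) := by
  simp only [mulVec, dotProduct, prod_univ_sum, piFinset_univ, prod_mul_distrib]

variable [DecidableEq κ]

theorem Fintype.prod_comp_eq_prod_pow_card_fiber {M : Type*} [CommMonoid M] (v : κ → M)
    (f : ι → κ) : ∏ i, v (f i) = ∏ k, v k ^ card {i // f i = k} := by
  simp only [← Fintype.prod_fiberwise' f v, prod_const, card_univ]

variable [DecidableEq ι]

theorem Fintype.card_perm_comp_eq_prod (f g : ι → κ) :
    card {σ : Perm ι // f ∘ σ = g} =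
      ∏ k, if card {i // f i = k} = card {i // g i = k} then (card {i // f i = k})! else 0 := by
  rw [Fintype.prod_ite_zero]
  split_ifs with h
  · obtain ⟨σ₀, hσ₀⟩ : ∃ σ₀ : Perm ι, f ∘ σ₀ = g :=
      ⟨ofFiberEquiv fun k => (equivOfCardEq (h k)).symm, funext (ofFiberEquiv_map _)⟩
    rw [← DomMulAct.stabilizer_card f]
    refine card_congr (subtypeEquiv (Equiv.mulRight σ₀⁻¹) fun σ => ?_)
    rw [← hσ₀]
    constructor
    · intro hσ; ext i; simpa using congrFun hσ (σ₀⁻¹ i)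
    · intro hσ; ext i; simpa using congrFun hσ (σ₀ i)
  · refine card_eq_zero_iff.mpr ⟨fun ⟨σ, hσ⟩ => h fun k => card_congr ?_⟩
    exact subtypeEquiv σ.symm fun i => by simp [← hσ]

theorem Matrix.permanent_mul_transpose_eq_sum {R : Type*} [CommSemiring R]
    (A B : Matrix ι κ R) :
    (A * Bᵀ).permanent = ∑ f : ι → κ, ∑ g : ι → κ,
      (card {σ : Perm ι // f ∘ σ = g} : R) * ((∏ i, A i (f i)) * ∏ i, B i (g i)) := by
  simp_rw [Fintype.card_subtype, natCast_card_filter, sum_mul, ite_mul, one_mul, zero_mul]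
  conv_rhs => enter [2, f]; rw [sum_comm]
  rw [permanent, sum_comm]
  simp_rw [Fintype.sum_ite_eq]
  -- for fixed `σ` only `g = f ∘ σ` survives, and `f = h ∘ σ⁻¹` gives `∏ i, (A * Bᵀ) (σ i) i`
  refine sum_congr rfl fun σ _ => ?_
  simp_rw [mul_apply, transpose_apply, prod_univ_sum, piFinset_univ, prod_mul_distrib]
  refine Fintype.sum_equiv (arrowCongr σ (Equiv.refl κ)) _ _ fun h => ?_
  rw [← Equiv.prod_comp σ (fun i => A i _)]
  simp

end Permanent

section GaussianMoments

noncomputable def gaussianCPDF (z : ℂ) : ℝ := Real.exp (-‖z‖ ^ 2) / Real.pi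

theorem gaussianCPDF_nonneg (z : ℂ) : 0 ≤ gaussianCPDF z := by unfold gaussianCPDF; positivity

theorem gaussianCPDF_circle_mul (u : Circle) (z : ℂ) : gaussianCPDF (u * z) = gaussianCPDF z := by
  simp [gaussianCPDF, Circle.norm_coe]

theorem gaussianC_eq_withDensity :
    gaussianC = volume.withDensity fun z => ENNReal.ofReal (gaussianCPDF z) := rfl

variable {E : Type*} [NormedAddCommGroup E] [NormedSpace ℝ E]

theorem integral_gaussianC (F : ℂ → E) :
    ∫ z, F z ∂gaussianC = ∫ z, gaussianCPDF z • F z := by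
  rw [gaussianC_eq_withDensity, integral_withDensity_eq_integral_toReal_smul
    (by unfold gaussianCPDF; fun_prop) (ae_of_all _ fun _ => ENNReal.ofReal_lt_top)]
  simp_rw [ENNReal.toReal_ofReal (gaussianCPDF_nonneg _)]

theorem integral_gaussianC_comp_circle_mul (u : Circle) (F : ℂ → E) :
    ∫ z, F (u * z) ∂gaussianC = ∫ z, F z ∂gaussianC :=
  calc ∫ z, F (u * z) ∂gaussianC
      = ∫ z, gaussianCPDF (rotation u z) • F (rotation u z) := by
        simp only [integral_gaussianC, rotation_apply, gaussianCPDF_circle_mul]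
    _ = ∫ z, gaussianCPDF z • F z := (rotation u).measurePreserving.integral_comp
        (rotation u).toHomeomorph.measurableEmbedding fun z => gaussianCPDF z • F z
    _ = ∫ z, F z ∂gaussianC := (integral_gaussianC F).symm

theorem integral_gaussianC_norm_rpow {q : ℝ} (hq : -2 < q) :
    ∫ z, ‖z‖ ^ q ∂gaussianC = Real.Gamma (q / 2 + 1) :=
  calc ∫ z, ‖z‖ ^ q ∂gaussianC
      = (∫ z : ℂ, ‖z‖ ^ q * Real.exp (-‖z‖ ^ (2 : ℝ))) / Real.pi := by
        rw [integral_gaussianC, ← integral_div]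
        simp_rw [gaussianCPDF, Real.rpow_two, smul_eq_mul]
        congr 1 with z
        ring
    _ = Real.Gamma (q / 2 + 1) := by
        rw [Complex.integral_rpow_mul_exp_neg_rpow one_le_two hq, add_div, div_self two_ne_zero]
        field_simp

theorem integrable_gaussianC_norm_rpow {q : ℝ} (hq : -2 < q) :
    Integrable (fun z => ‖z‖ ^ q) gaussianC :=
  -- the integral is `Γ (q / 2 + 1) ≠ 0`, whereas a non-integrable function has integral `0`
  .of_integral_ne_zero <| by
    rw [integral_gaussianC_norm_rpow hq]
    exact (Real.Gamma_pos_of_pos (by linarith)).ne'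

instance : IsProbabilityMeasure gaussianC := by
  have h := integral_gaussianC_norm_rpow (q := 0) (by norm_num)
  simp only [Real.rpow_zero, integral_const, smul_eq_mul, mul_one, zero_div, zero_add,
    Real.Gamma_one] at h
  exact ⟨(ENNReal.toReal_eq_one_iff _).mp h⟩

theorem integrable_gaussianC_pow_mul_conj_pow (a b : ℕ) :
    Integrable (fun z : ℂ => z ^ a * conj z ^ b) gaussianC := by
  refine (integrable_gaussianC_norm_rpow (q := (a + b : ℕ))
    (by linarith [(a + b).cast_nonneg (α := ℝ)])).mono' (by fun_prop) (ae_of_all _ fun z => ?_)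
  rw [Real.rpow_natCast]
  simp [pow_add]

theorem integral_gaussianC_pow_mul_conj_pow (a b : ℕ) :
    ∫ z, z ^ a * conj z ^ b ∂gaussianC = if a = b then (a ! : ℂ) else 0 := by
  split_ifs with hab
  · subst hab
    have h : ∀ z : ℂ, z ^ a * conj z ^ a = ((‖z‖ ^ ((2 * a : ℕ) : ℝ) : ℝ) : ℂ) := fun z => by
      rw [Real.rpow_natCast, ← mul_pow, mul_conj, pow_mul, ← Complex.sq_norm]
      push_cast; ring
    simp_rw [h, integral_complex_ofReal,
      integral_gaussianC_norm_rpow (by linarith [(2 * a).cast_nonneg (α := ℝ)])]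
    rw [show ((2 * a : ℕ) : ℝ) / 2 + 1 = (a : ℝ) + 1 by push_cast; ring,
      Real.Gamma_nat_eq_factorial]
    push_cast; rfl
  · -- rotating by `u = exp (i π / (a - b))` multiplies the integrand by `u ^ a * conj u ^ b = -1`
    set u := Circle.exp (Real.pi / (a - b))
    have hu : (u : ℂ) ^ a * conj (u : ℂ) ^ b = -1 := by
      have hθ : ((a : ℂ) - b) * (Real.pi / (a - b) : ℝ) = Real.pi := by
        have h : (a : ℝ) - b ≠ 0 := sub_ne_zero.mpr (Nat.cast_injective.ne hab)
        exact_mod_cast mul_div_cancel₀ Real.pi h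
      rw [Circle.coe_exp, ← exp_conj, ← exp_nat_mul, ← exp_nat_mul, ← exp_add, map_mul,
        conj_ofReal, conj_I, ← exp_pi_mul_I]
      congr 1
      linear_combination I * hθ
    have h := integral_gaussianC_comp_circle_mul u fun z => z ^ a * conj z ^ b
    simp_rw [map_mul, mul_pow, mul_mul_mul_comm _ _ (conj (u : ℂ) ^ b), hu, neg_one_mul,
      integral_neg] at h
    linear_combination (-1 / 2 : ℂ) * h

end GaussianMoments

section Monomials

variable {ι κ : Type*} [Fintype ι] [Fintype κ] [DecidableEq κ]

theorem prod_comp_mul_prod_comp_conj_eq_prod_pow (f g : ι → κ) (v : κ → ℂ) :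
    (∏ i, v (f i)) * ∏ i, conj (v (g i)) =
      ∏ k, v k ^ card {i // f i = k} * conj (v k) ^ card {i // g i = k} := by
  rw [prod_comp_eq_prod_pow_card_fiber v, prod_comp_eq_prod_pow_card_fiber (fun k => conj (v k)),
    ← prod_mul_distrib]

theorem integrable_pi_gaussianC_prod_comp_mul_prod_comp_conj (f g : ι → κ) :
    Integrable (fun v : κ → ℂ => (∏ i, v (f i)) * ∏ i, conj (v (g i)))
      (Measure.pi fun _ => gaussianC) := by
  simp_rw [prod_comp_mul_prod_comp_conj_eq_prod_pow]
  exact Integrable.fintype_prod fun k => integrable_gaussianC_pow_mul_conj_pow _ _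

theorem integral_pi_gaussianC_prod_comp_mul_prod_comp_conj [DecidableEq ι] (f g : ι → κ) :
    ∫ v : κ → ℂ, (∏ i, v (f i)) * ∏ i, conj (v (g i)) ∂(Measure.pi fun _ => gaussianC) =
      card {σ : Perm ι // f ∘ σ = g} := by
  simp_rw [prod_comp_mul_prod_comp_conj_eq_prod_pow]
  rw [integral_fintype_prod_eq_prod fun k z =>
    z ^ card {i // f i = k} * conj z ^ card {i // g i = k}]
  simp_rw [integral_gaussianC_pow_mul_conj_pow, card_perm_comp_eq_prod]
  push_cast
  rfl

end Monomials

/-- Wick/permanent formula for joint moments of complex Gaussians: if `Z = Av` and `W = Bv`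
with `v` a vector of i.i.d. standard complex Gaussians, then
`E[Z₁⋯Zₙ conj(W₁)⋯conj(Wₙ)] = perm(AB*)`. -/
theorem gaussian_moments_permanent (n m : ℕ) (A B : Matrix (Fin n) (Fin m) ℂ) :
    ∫ v : Fin m → ℂ,
        (∏ j : Fin n, A.mulVec v j) * (∏ j : Fin n, (starRingEnd ℂ) (B.mulVec v j))
        ∂(Measure.pi fun _ : Fin m => gaussianC) =
      (A * B.conjTranspose).permanent := by
  have hexpand : ∀ v : Fin m → ℂ,
      (∏ j, A.mulVec v j) * (∏ j, conj (B.mulVec v j)) =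
        ∑ f : Fin n → Fin m, ∑ g : Fin n → Fin m,
          ((∏ j, A j (f j)) * ∏ j, conj (B j (g j))) * ((∏ j, v (f j)) * ∏ j, conj (v (g j))) := by
    intro v
    simp_rw [RingHom.map_mulVec, prod_mulVec_eq_sum, Fintype.sum_mul_sum]
    refine sum_congr rfl fun f _ => sum_congr rfl fun g _ => ?_
    simp only [map_apply, Function.comp_apply]
    ring
  have hint (f g : Fin n → Fin m) :=
    (integrable_pi_gaussianC_prod_comp_mul_prod_comp_conj f g).const_mul
      ((∏ j, A j (f j)) * ∏ j, conj (B j (g j)))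
  simp_rw [hexpand]
  rw [integral_finsetSum _ fun f _ => integrable_finsetSum _ fun g _ => hint f g]
  simp_rw [integral_finsetSum _ fun g _ => hint _ g, integral_const_mul,
    integral_pi_gaussianC_prod_comp_mul_prod_comp_conj]
  rw [conjTranspose, transpose_map, permanent_mul_transpose_eq_sum]
  simp only [map_apply, starRingEnd_apply, mul_comm]
end

section
/- Let z_1, …, z_n be points of the open unit disk 𝔻 ⊂ ℂ, and define the n×n matrices A and M by A_{jk} = (1 − z_j conj(z_k))^{−1} and M_{jk} = (1 − z_j conj(z_k))^{−2}. Then perm(A) · det(A) = det(M). -/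
/-!
Write `w k = conj (z k)`. Multiplying row `j` of `A` by `∏ m, (1 - z j * w m)` gives the matrix `B`
with entries `∏_{m ≠ k} (1 - z j * w m)`, and the identity for `A` is equivalent to
`det B * perm B = det (B ⊙ B)`, a polynomial identity in the `z j`, `w k`. It suffices to prove it
for generic values in a field, by induction on `n`. As polynomials in `t = z 0` both sides have
degree at most `2n`, and they agree at the `2n + 1` points `t = z j` (`j ≠ 0`), where two rows of
`B` coincide, and `t = (w k)⁻¹`, where row `0` of `B` vanishes outside column `k`, so that expanding
along it reduces the identity to size `n`.
-/

open Finset Polynomial Function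
open scoped Matrix

namespace Matrix

variable {m R S : Type*} [Fintype m] [DecidableEq m] [CommRing R] [CommRing S]

theorem permanent_map (f : R →+* S) (M : Matrix m m R) :
    (M.map f).permanent = f M.permanent := by
  simp only [permanent, map_sum, map_prod, map_apply]

theorem permanent_mul_column (v : m → R) (M : Matrix m m R) :
    (of fun i j => v i * M i j).permanent = (∏ i, v i) * M.permanent := by
  simp only [permanent, of_apply, prod_mul_distrib, mul_sum]
  exact sum_congr rfl fun σ _ => by rw [Equiv.prod_comp σ v]

omit [Fintype m] [DecidableEq m] in
theorem map_hadamard (f : R →+* S) (A B : Matrix m m R) :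
    (A ⊙ B).map f = A.map f ⊙ B.map f := by
  ext
  simp [hadamard_apply]

theorem permanent_succ_column_zero {n : ℕ} (A : Matrix (Fin (n + 1)) (Fin (n + 1)) R) :
    A.permanent = ∑ i : Fin (n + 1), A i 0 * (A.submatrix i.succAbove Fin.succ).permanent := by
  rw [permanent, Finset.univ_perm_fin_succ, ← univ_product_univ, sum_map, sum_product]
  refine sum_congr rfl fun i _ => ?_
  rw [permanent, mul_sum]
  induction i using Fin.cases with
  | zero =>
    refine sum_congr rfl fun σ _ => ?_
    simp [Fin.prod_univ_succ, Equiv.Perm.decomposeFin_symm_apply_zero,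
      Equiv.Perm.decomposeFin_symm_apply_succ, submatrix]
  | succ p =>
    -- `univ_perm_fin_succ` embeds `Perm (Fin n)` unlike the minor; `cycleRange` corrects this.
    have hσ (σ : Equiv.Perm (Fin n)) : ∏ i, A (Equiv.Perm.decomposeFin.symm (p.succ, σ) i) i =
        A p.succ 0 * ∏ i, (A.submatrix p.succ.succAbove Fin.succ) ((p.cycleRange * σ) i) i := by
      simp [Fin.prod_univ_succ, Equiv.Perm.decomposeFin_symm_apply_zero,
        Equiv.Perm.decomposeFin_symm_apply_succ, Fin.succAbove_cycleRange, submatrix]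
    simp only [Equiv.toEmbedding_apply, hσ]
    exact (Group.mulLeft_bijective p.cycleRange).sum_comp
      fun τ => A p.succ 0 * ∏ i, (A.submatrix p.succ.succAbove Fin.succ) (τ i) i

theorem permanent_succ_row_zero {n : ℕ} (A : Matrix (Fin (n + 1)) (Fin (n + 1)) R) :
    A.permanent = ∑ j : Fin (n + 1), A 0 j * (A.submatrix Fin.succ j.succAbove).permanent := by
  rw [← permanent_transpose, permanent_succ_column_zero]
  refine sum_congr rfl fun j _ => ?_
  rw [← permanent_transpose]
  simp [transpose_submatrix]

theorem natDegree_det_le_sum (M : Matrix m m R[X]) (b : m → ℕ)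
    (hb : ∀ i j, (M i j).natDegree ≤ b i) : M.det.natDegree ≤ ∑ i, b i := by
  rw [det_apply']
  refine natDegree_sum_le_of_forall_le _ _ fun σ _ => natDegree_mul_le.trans ?_
  rw [natDegree_intCast, zero_add]
  calc _ ≤ ∑ i, (M (σ i) i).natDegree := natDegree_prod_le _ _
    _ ≤ ∑ i, b (σ i) := sum_le_sum fun i _ => hb _ _
    _ = ∑ i, b i := Equiv.sum_comp σ b

theorem natDegree_permanent_le_sum (M : Matrix m m R[X]) (b : m → ℕ)
    (hb : ∀ i j, (M i j).natDegree ≤ b i) : M.permanent.natDegree ≤ ∑ i, b i := by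
  refine natDegree_sum_le_of_forall_le _ _ fun σ _ => ?_
  calc _ ≤ ∑ i, (M (σ i) i).natDegree := natDegree_prod_le _ _
    _ ≤ ∑ i, b (σ i) := sum_le_sum fun i _ => hb _ _
    _ = ∑ i, b i := Equiv.sum_comp σ b

end Matrix

theorem Fin.prod_univ_erase_succAbove {M : Type*} [CommMonoid M] {n : ℕ} (f : Fin (n + 1) → M)
    (k : Fin (n + 1)) (c : Fin n) :
    ∏ i ∈ univ.erase (k.succAbove c), f i = f k * ∏ i ∈ univ.erase c, f (k.succAbove i) := by
  have herase {p : ℕ} (g : Fin p → M) (a : Fin p) :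
      ∏ i ∈ univ.erase a, g i = ∏ i, update g a 1 i := by
    rw [prod_update_of_mem (mem_univ a), one_mul, sdiff_singleton_eq_erase]
  rw [herase, herase, Fin.prod_univ_succAbove _ k, update_of_ne (Fin.succAbove_ne k c).symm,
    update_comp_eq_of_injective' f Fin.succAbove_right_injective]

section BorchardtIdentity

open Matrix

variable {m R S : Type*} [Fintype m] [DecidableEq m] [CommRing R] [CommRing S]

def BorchardtIdentity (M : Matrix m m R) : Prop :=
  M.det * M.permanent = (M ⊙ M).det

theorem map_det_mul_permanent_sub_det_hadamard (f : R →+* S) (M : Matrix m m R) :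
    f (M.det * M.permanent - (M ⊙ M).det) =
      (M.map f).det * (M.map f).permanent - (M.map f ⊙ M.map f).det := by
  rw [map_sub, map_mul, RingHom.map_det, RingHom.map_det, ← permanent_map, RingHom.mapMatrix_apply,
    RingHom.mapMatrix_apply, map_hadamard]

theorem BorchardtIdentity.map {M : Matrix m m R} (h : BorchardtIdentity M) (f : R →+* S) :
    BorchardtIdentity (M.map f) := by
  rw [BorchardtIdentity, ← sub_eq_zero, ← map_det_mul_permanent_sub_det_hadamard,
    sub_eq_zero.mpr h, map_zero]

theorem BorchardtIdentity.of_map {M : Matrix m m R} {f : R →+* S} (hf : Injective f)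
    (h : BorchardtIdentity (M.map f)) : BorchardtIdentity M := by
  rw [BorchardtIdentity, ← sub_eq_zero, ← map_eq_zero_iff f hf,
    map_det_mul_permanent_sub_det_hadamard, sub_eq_zero.mpr h]

theorem BorchardtIdentity.of_row_eq {M : Matrix m m R} {i j : m} (hij : i ≠ j) (h : M i = M j) :
    BorchardtIdentity M := by
  have h2 : (M ⊙ M) i = (M ⊙ M) j := funext fun c => by simp only [hadamard_apply, h]
  rw [BorchardtIdentity, det_zero_of_row_eq hij h, det_zero_of_row_eq hij h2, zero_mul]

theorem borchardtIdentity_mul_column_iff [IsDomain R] {v : m → R} (hv : ∀ i, v i ≠ 0)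
    (M : Matrix m m R) :
    BorchardtIdentity (of fun i j => v i * M i j) ↔ BorchardtIdentity M := by
  have hsq : (of fun i j => v i * M i j) ⊙ (of fun i j => v i * M i j) =
      of fun i j => (v i * v i) * (M ⊙ M) i j := by
    ext; simp only [hadamard_apply, of_apply]; ring
  have hv' : (∏ i, v i) * (∏ i, v i) ≠ 0 := mul_ne_zero (prod_ne_zero_iff.mpr fun i _ => hv i)
    (prod_ne_zero_iff.mpr fun i _ => hv i)
  rw [BorchardtIdentity, BorchardtIdentity, hsq, det_mul_column, det_mul_column,
    permanent_mul_column, prod_mul_distrib, mul_mul_mul_comm, mul_right_inj' hv']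

theorem BorchardtIdentity.of_submatrix {n : ℕ} {M : Matrix (Fin (n + 1)) (Fin (n + 1)) R}
    {k : Fin (n + 1)} (hM : ∀ c ≠ k, M 0 c = 0)
    (h : BorchardtIdentity (M.submatrix Fin.succ k.succAbove)) : BorchardtIdentity M := by
  have hM2 : ∀ c ≠ k, (M ⊙ M) 0 c = 0 := fun c hc => by rw [hadamard_apply, hM c hc, zero_mul]
  have hdet {N : Matrix (Fin (n + 1)) (Fin (n + 1)) R} (hN : ∀ c ≠ k, N 0 c = 0) :
      N.det = (-1) ^ (k : ℕ) * N 0 k * (N.submatrix Fin.succ k.succAbove).det := by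
    rw [det_succ_row_zero, sum_eq_single k (fun c _ hc => by rw [hN c hc, mul_zero, zero_mul])
      (by simp)]
  have hperm : M.permanent = M 0 k * (M.submatrix Fin.succ k.succAbove).permanent := by
    rw [permanent_succ_row_zero, sum_eq_single k (fun c _ hc => by rw [hM c hc, zero_mul])
      (by simp)]
  rw [BorchardtIdentity, hdet hM, hdet hM2, hperm, submatrix_hadamard, ← h, hadamard_apply]
  ring

theorem BorchardtIdentity.of_eval [IsDomain R] {M : Matrix m m R[X]} (b : m → ℕ)
    (hb : ∀ i j, (M i j).natDegree ≤ b i) {ι : Type*} [Fintype ι] {t : ι → R} (ht : Injective t)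
    (hcard : 2 * ∑ i, b i < Fintype.card ι) (h : ∀ i, BorchardtIdentity (M.map (eval (t i)))) :
    BorchardtIdentity M := by
  refine sub_eq_zero.mp (eq_zero_of_natDegree_lt_card_of_eval_eq_zero _ ht (fun i => ?_) ?_)
  · rw [← coe_evalRingHom, map_det_mul_permanent_sub_det_hadamard]
    exact sub_eq_zero.mpr (h i)
  have hb2 : ∀ i j, ((M ⊙ M) i j).natDegree ≤ 2 * b i := fun i j =>
    natDegree_mul_le.trans (by linarith [hb i j])
  refine lt_of_le_of_lt (natDegree_sub_le _ _) (max_lt (lt_of_le_of_lt natDegree_mul_le ?_) ?_)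
  · linarith [natDegree_det_le_sum M b hb, natDegree_permanent_le_sum M b hb]
  · refine lt_of_le_of_lt (natDegree_det_le_sum _ _ hb2) ?_
    rwa [← mul_sum]

end BorchardtIdentity

section ClearedCauchy

open Matrix

variable {ι κ R S : Type*} [Fintype κ] [DecidableEq κ] [CommRing R] [CommRing S]

/-- The Cauchy-type matrix `((1 - z j * w k)⁻¹)` with row `j` multiplied by `∏ m, (1 - z j * w m)`.
It involves no division, so Borchardt's identity for it is a polynomial identity. -/
def clearedCauchy (z : ι → R) (w : κ → R) : Matrix ι κ R :=
  of fun j k => ∏ m ∈ univ.erase k, (1 - z j * w m)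

theorem clearedCauchy_map (f : R →+* S) (z : ι → R) (w : κ → R) :
    (clearedCauchy z w).map f = clearedCauchy (f ∘ z) (f ∘ w) := by
  ext
  simp [clearedCauchy]

theorem clearedCauchy_apply_eq_zero {z : ι → R} {w : κ → R} {j : ι} {k c : κ}
    (h : z j * w k = 1) (hc : c ≠ k) : clearedCauchy z w j c = 0 :=
  prod_eq_zero (mem_erase.mpr ⟨hc.symm, mem_univ k⟩) (by rw [h, sub_self])

theorem clearedCauchy_apply_succAbove {n : ℕ} (z : ι → R) (w : Fin (n + 1) → R) (j : ι)
    (k : Fin (n + 1)) (c : Fin n) :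
    clearedCauchy z w j (k.succAbove c) = (1 - z j * w k) * clearedCauchy z (w ∘ k.succAbove) j c :=
  Fin.prod_univ_erase_succAbove _ k c

theorem clearedCauchy_eq_mul_column {K : Type*} [Field K] (z : ι → K) (w : κ → K)
    (h : ∀ j k, 1 - z j * w k ≠ 0) :
    clearedCauchy z w = of fun j k => (∏ m, (1 - z j * w m)) * (1 - z j * w k)⁻¹ := by
  ext j k
  rw [of_apply, ← mul_prod_erase univ _ (mem_univ k), mul_right_comm, mul_inv_cancel₀ (h j k),
    one_mul]
  rfl

theorem BorchardtIdentity.clearedCauchy_of_mul_eq_one [IsDomain R] {n : ℕ}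
    {z w : Fin (n + 1) → R} {k : Fin (n + 1)} (hk : z 0 * w k = 1)
    (hzw : ∀ j, z (Fin.succ j) * w k ≠ 1)
    (h : BorchardtIdentity (clearedCauchy (z ∘ Fin.succ) (w ∘ k.succAbove))) :
    BorchardtIdentity (clearedCauchy z w) := by
  refine .of_submatrix (k := k) (fun c hc => clearedCauchy_apply_eq_zero hk hc) ?_
  have hminor : (clearedCauchy z w).submatrix Fin.succ k.succAbove =
      of fun j c => (1 - z j.succ * w k) * clearedCauchy (z ∘ Fin.succ) (w ∘ k.succAbove) j c := by
    ext j c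
    exact clearedCauchy_apply_succAbove z w j.succ k c
  rwa [hminor, borchardtIdentity_mul_column_iff fun j => sub_ne_zero.mpr (hzw j).symm]

theorem BorchardtIdentity.clearedCauchy_succ {K : Type*} [Field K] {n : ℕ}
    (IH : ∀ z w : Fin n → K, BorchardtIdentity (clearedCauchy z w))
    {z w : Fin (n + 1) → K} (hz : Injective (z ∘ Fin.succ)) (hw : Injective w)
    (hw0 : ∀ k, w k ≠ 0) (hzw : ∀ j k, z j * w k ≠ 1) :
    BorchardtIdentity (clearedCauchy z w) := by
  set zX : Fin (n + 1) → K[X] := update (C ∘ z) 0 X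
  have heval (t : K) :
      (clearedCauchy zX (C ∘ w)).map (eval t) = clearedCauchy (update z 0 t) w := by
    rw [← coe_evalRingHom, clearedCauchy_map, comp_update, ← comp_assoc, ← comp_assoc]
    simp [comp_def]
  have hdeg (j k : Fin (n + 1)) :
      ((clearedCauchy zX (C ∘ w)) j k).natDegree ≤ if j = 0 then n else 0 := by
    calc _ ≤ ∑ m ∈ univ.erase k, (1 - zX j * C (w m)).natDegree := natDegree_prod_le _ _
      _ ≤ ∑ m ∈ univ.erase k, (zX j).natDegree := sum_le_sum fun m _ =>
          (natDegree_sub_le _ _).trans (by simpa using natDegree_mul_C_le (zX j) (w m))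
      _ = if j = 0 then n else 0 := by by_cases hj : j = 0 <;> simp [zX, hj]
  have hpoints : Injective (Sum.elim (z ∘ Fin.succ) fun k => (w k)⁻¹) := by
    refine hz.sumElim (fun a b hab => hw (inv_injective hab)) fun j k hjk => hzw j.succ k ?_
    rw [Function.comp_apply] at hjk
    rw [hjk, inv_mul_cancel₀ (hw0 k)]
  have hpoly : BorchardtIdentity (clearedCauchy zX (C ∘ w)) := by
    refine .of_eval _ hdeg hpoints ?_ fun i => ?_
    · simp only [Fintype.card_sum, Fintype.card_fin, Fintype.sum_ite_eq']
      omega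
    rw [heval]
    rcases i with j | k
    · refine .of_row_eq (Fin.succ_ne_zero j).symm (funext fun c => ?_)
      simp [clearedCauchy]
    · refine .clearedCauchy_of_mul_eq_one (k := k) ?_ ?_ (IH _ _)
      · simp [inv_mul_cancel₀ (hw0 k)]
      · simpa [update_of_ne (Fin.succ_ne_zero _)] using fun j : Fin n => hzw j.succ k
  simpa [heval] using hpoly.map (evalRingHom (z 0))

theorem borchardtIdentity_clearedCauchy_iff {ι K : Type*} [Fintype ι] [DecidableEq ι] [Field K]
    {z w : ι → K} (h : ∀ j k, 1 - z j * w k ≠ 0) :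
    BorchardtIdentity (clearedCauchy z w) ↔
      BorchardtIdentity (of fun j k => (1 - z j * w k)⁻¹) := by
  rw [clearedCauchy_eq_mul_column z w h]
  exact borchardtIdentity_mul_column_iff (fun j => prod_ne_zero_iff.mpr fun k _ => h j k) _

end ClearedCauchy

section Generic

open MvPolynomial

theorem BorchardtIdentity.clearedCauchy_of_generic {n : ℕ}
    (h : BorchardtIdentity (clearedCauchy (X ∘ Sum.inl) (X ∘ Sum.inr) :
      Matrix (Fin n) (Fin n) (MvPolynomial (Fin n ⊕ Fin n) ℤ)))
    {R : Type*} [CommRing R] (z w : Fin n → R) : BorchardtIdentity (clearedCauchy z w) := by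
  have := h.map (eval₂Hom (Int.castRingHom R) (Sum.elim z w))
  rw [clearedCauchy_map] at this
  convert this using 2 <;> funext i <;> simp

theorem borchardtIdentity_clearedCauchy_generic (n : ℕ) :
    BorchardtIdentity (clearedCauchy (X ∘ Sum.inl) (X ∘ Sum.inr) :
      Matrix (Fin n) (Fin n) (MvPolynomial (Fin n ⊕ Fin n) ℤ)) := by
  induction n with
  | zero => simp [BorchardtIdentity, Matrix.permanent_isEmpty]
  | succ n ih =>
    set S := MvPolynomial (Fin (n + 1) ⊕ Fin (n + 1)) ℤ
    have hφ : Injective (algebraMap S (FractionRing S)) := IsFractionRing.injective S _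
    refine .of_map hφ ?_
    rw [clearedCauchy_map]
    refine .clearedCauchy_succ ih.clearedCauchy_of_generic ?_ ?_ (fun k => ?_) (fun j k => ?_)
    · exact hφ.comp (X_injective.comp (Sum.inl_injective.comp (Fin.succ_injective _)))
    · exact hφ.comp (X_injective.comp Sum.inr_injective)
    · exact (map_ne_zero_iff _ hφ).mpr (X_ne_zero _)
    · simp only [comp_apply]
      rw [← map_mul, Ne, map_eq_one_iff _ hφ]
      intro h
      simpa using congrArg MvPolynomial.constantCoeff h

end Generic

theorem borchardtIdentity_clearedCauchy {R : Type*} [CommRing R] {n : ℕ} (z w : Fin n → R) :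
    BorchardtIdentity (clearedCauchy z w) :=
  (borchardtIdentity_clearedCauchy_generic n).clearedCauchy_of_generic z w

/-- Borchardt's identity applied to points of the unit disk: with
`A_{jk} = (1 - z_j conj(z_k))⁻¹` and `M_{jk} = (1 - z_j conj(z_k))⁻²`,
one has `perm(A) · det(A) = det(M)`. -/
theorem borchardt_unit_disk (n : ℕ) (z : Fin n → ℂ) (hz : ∀ i, ‖z i‖ < 1) :
    (Matrix.of fun j k : Fin n => (1 - z j * (starRingEnd ℂ) (z k))⁻¹).permanent *
      (Matrix.of fun j k : Fin n => (1 - z j * (starRingEnd ℂ) (z k))⁻¹).det =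
    (Matrix.of fun j k : Fin n => ((1 - z j * (starRingEnd ℂ) (z k)) ^ 2)⁻¹).det := by
  have hne (j k : Fin n) : 1 - z j * (starRingEnd ℂ ∘ z) k ≠ 0 := by
    refine sub_ne_zero.mpr (ne_of_apply_ne norm (ne_of_gt ?_))
    rw [comp_apply, norm_mul, Complex.norm_conj, norm_one]
    exact mul_lt_one_of_nonneg_of_lt_one_left (norm_nonneg _) (hz j) (hz k).le
  have h := (borchardtIdentity_clearedCauchy_iff hne).mp (borchardtIdentity_clearedCauchy _ _)
  have hsq : (Matrix.of fun j k : Fin n => ((1 - z j * (starRingEnd ℂ) (z k)) ^ 2)⁻¹) =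
      (Matrix.of fun j k : Fin n => (1 - z j * (starRingEnd ℂ) (z k))⁻¹) ⊙
        (Matrix.of fun j k : Fin n => (1 - z j * (starRingEnd ℂ) (z k))⁻¹) := by
    ext
    simp [Matrix.hadamard_apply, sq]
  rw [mul_comm, hsq]
  exact h
end

section
/- Let ρ > 0 and fix r ∈ (0,1). There exist constants c > 0 and γ > 0 such that for every x > 0, P({a : sup_{|z| ≤ r} |f_{a,ρ}(z)| > x}) ≤ c·e^{−γx²}. -/
open MeasureTheory Complex Filter Metric Set

/-- `P` is the law of an i.i.d. sequence of standard complex Gaussian coefficients: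
a probability measure on `ℕ → ℂ` whose finite-dimensional cylinder marginals are
the corresponding products of `gaussianC`. -/
def IsGaussianSeqMeasure (P : Measure (ℕ → ℂ)) : Prop :=
  IsProbabilityMeasure P ∧
    ∀ s : ℕ → Set ℂ, (∀ n, MeasurableSet (s n)) →
      ∀ t : Finset ℕ, P {a | ∀ n ∈ t, a n ∈ s n} = ∏ n ∈ t, gaussianC (s n)

/-- `c_n(ρ) = ρ(ρ+1)⋯(ρ+n−1)/n!` (with `c_0(ρ) = 1`). -/
noncomputable def cRho (ρ : ℝ) (n : ℕ) : ℝ :=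
  (∏ i ∈ Finset.range n, (ρ + i)) / (n.factorial : ℝ)

/-- The random power series `f_{a,ρ}(z) = ∑ c_n(ρ)^{1/2} a_n z^n`. -/
noncomputable def fRho (ρ : ℝ) (a : ℕ → ℂ) (z : ℂ) : ℂ :=
  ∑' n : ℕ, (Real.sqrt (cRho ρ n) : ℂ) * a n * z ^ n

/-!
With `S = ∑ (n + 1) √cₙ rⁿ < ∞` (ratio test), the bounds `‖aₙ‖ ≤ x (n + 1) / S` for all `n`
force `‖f‖ ≤ x` on the closed disc of radius `r`. Hence the event is covered by the events
`‖aₙ‖ > x (n + 1) / S`, of Gaussian probability at most `2 exp (-γ x² (n + 1)²)` with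
`γ = 1 / (2 S²)`. When `γ x² ≥ 1` these sum to at most `4 exp (-γ x²)`; when `γ x² < 1` the
trivial bound `1 ≤ 4 exp (-γ x²)` suffices.
-/
theorem IsGaussianSeqMeasure.measure_eval_mem {P : Measure (ℕ → ℂ)} (hP : IsGaussianSeqMeasure P)
    (n : ℕ) {s : Set ℂ} (hs : MeasurableSet s) : P {a | a n ∈ s} = gaussianC s := by
  simpa using hP.2 (fun _ => s) (fun _ => hs) {n}

lemma lintegral_exp_neg_half_mul_sq_norm :
    ∫⁻ z : ℂ, ENNReal.ofReal (Real.exp (-(1 / 2) * ‖z‖ ^ 2)) = ENNReal.ofReal (2 * Real.pi) := by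
  have hint : ∫ z : ℂ, Real.exp (-(1 / 2) * ‖z‖ ^ 2) = 2 * Real.pi := by
    rw [GaussianFourier.integral_rexp_neg_mul_sq_norm (by norm_num), Complex.finrank_real_complex]
    norm_num
    ring
  rw [← ofReal_integral_eq_lintegral_ofReal
    (Integrable.of_integral_ne_zero (by rw [hint]; positivity))
    (Eventually.of_forall fun z => (Real.exp_pos _).le), hint]

/-- Chernoff bound: `exp (-‖z‖²) ≤ exp (-t²/2) exp (-‖z‖²/2)` when `t < ‖z‖`. -/
lemma gaussianC_setOf_lt_norm_le {t : ℝ} (ht : 0 ≤ t) :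
    gaussianC {w | t < ‖w‖} ≤ ENNReal.ofReal (2 * Real.exp (-t ^ 2 / 2)) := by
  have hmeas : MeasurableSet {w : ℂ | t < ‖w‖} := measurableSet_lt measurable_const measurable_norm
  set g : ℂ → ℝ := fun z => Real.exp (-t ^ 2 / 2) / Real.pi * Real.exp (-(1 / 2) * ‖z‖ ^ 2)
  have hdens : ∀ z ∈ {w : ℂ | t < ‖w‖}, Real.exp (-‖z‖ ^ 2) / Real.pi ≤ g z := by
    intro z hz
    rw [show g z = _ from div_mul_eq_mul_div _ _ _, ← Real.exp_add]
    gcongr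
    nlinarith [pow_le_pow_left₀ ht (le_of_lt hz) 2]
  calc gaussianC {w | t < ‖w‖}
      ≤ ∫⁻ z in {w | t < ‖w‖}, ENNReal.ofReal (g z) := by
        rw [gaussianC, withDensity_apply _ hmeas]
        exact setLIntegral_mono (by fun_prop) fun z hz => ENNReal.ofReal_le_ofReal (hdens z hz)
    _ ≤ ∫⁻ z, ENNReal.ofReal (g z) := setLIntegral_le_lintegral _ _
    _ = ENNReal.ofReal (2 * Real.exp (-t ^ 2 / 2)) := by
        simp only [g, ENNReal.ofReal_mul (by positivity : 0 ≤ Real.exp (-t ^ 2 / 2) / Real.pi)]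
        rw [lintegral_const_mul _ (by fun_prop), lintegral_exp_neg_half_mul_sq_norm,
          ← ENNReal.ofReal_mul (by positivity)]
        congr 1
        field_simp

lemma cRho_pos {ρ : ℝ} (hρ : 0 < ρ) (n : ℕ) : 0 < cRho ρ n :=
  div_pos (Finset.prod_pos fun i _ => by positivity) (by exact_mod_cast n.factorial_pos)

lemma cRho_succ (ρ : ℝ) (n : ℕ) : cRho ρ (n + 1) = cRho ρ n * ((ρ + n) / (n + 1)) := by
  simp only [cRho, Finset.prod_range_succ, Nat.factorial_succ]
  push_cast
  rw [div_mul_div_comm, mul_comm ((n : ℝ) + 1)]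

lemma summable_succ_mul_sqrt_cRho_mul_pow {ρ r : ℝ} (hρ : 0 < ρ) (hr0 : 0 < r) (hr1 : r < 1) :
    Summable fun n : ℕ => (n + 1) * √(cRho ρ n) * r ^ n := by
  refine summable_of_ratio_test_tendsto_lt_one hr1
    (Eventually.of_forall fun n => by have := cRho_pos hρ n; positivity) ?_
  have hlim : Tendsto (fun n : ℕ => (2 + 1 * n) / (1 + 1 * n) * √((ρ + 1 * n) / (1 + 1 * n)) * r)
      atTop (nhds r) := by
    simpa using ((tendsto_add_mul_div_add_mul_atTop_nhds (2 : ℝ) 1 1 one_ne_zero).mul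
      (tendsto_add_mul_div_add_mul_atTop_nhds ρ 1 1 one_ne_zero).sqrt).mul_const r
  refine hlim.congr fun n => ?_
  have := cRho_pos hρ n
  rw [Real.norm_of_nonneg (by positivity), Real.norm_of_nonneg (by positivity), cRho_succ,
    Real.sqrt_mul this.le]
  push_cast
  field_simp
  rw [add_comm 1 (n : ℝ)]
  ring

lemma norm_fRho_le {ρ r M : ℝ} {a : ℕ → ℂ} {z : ℂ}
    (hsum : Summable fun n : ℕ => (n + 1) * √(cRho ρ n) * r ^ n)
    (ha : ∀ n : ℕ, ‖a n‖ ≤ M * (n + 1)) (hz : ‖z‖ ≤ r) :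
    ‖fRho ρ a z‖ ≤ M * ∑' n : ℕ, (n + 1) * √(cRho ρ n) * r ^ n := by
  have hterm : ∀ n : ℕ,
      ‖(√(cRho ρ n) : ℂ) * a n * z ^ n‖ ≤ M * ((n + 1) * √(cRho ρ n) * r ^ n) := by
    intro n
    rw [norm_mul, norm_mul, norm_pow, Complex.norm_real, Real.norm_of_nonneg (Real.sqrt_nonneg _)]
    calc √(cRho ρ n) * ‖a n‖ * ‖z‖ ^ n ≤ √(cRho ρ n) * (M * (n + 1)) * r ^ n := by
          have hM : 0 ≤ M * (n + 1) := (norm_nonneg _).trans (ha n)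
          gcongr
          exact ha n
      _ = M * ((n + 1) * √(cRho ρ n) * r ^ n) := by ring
  have hnorm := (hsum.mul_left M).of_nonneg_of_le (fun _ => norm_nonneg _) hterm
  calc ‖fRho ρ a z‖ ≤ ∑' n : ℕ, ‖(√(cRho ρ n) : ℂ) * a n * z ^ n‖ := norm_tsum_le_tsum_norm hnorm
    _ ≤ ∑' n : ℕ, M * ((n + 1) * √(cRho ρ n) * r ^ n) :=
        hnorm.tsum_le_tsum hterm (hsum.mul_left M)
    _ = M * ∑' n : ℕ, (n + 1) * √(cRho ρ n) * r ^ n := tsum_mul_left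

lemma setOf_lt_norm_fRho_subset_iUnion {ρ r x : ℝ}
    (hsum : Summable fun n : ℕ => (n + 1) * √(cRho ρ n) * r ^ n)
    (hS : 0 < ∑' n : ℕ, (n + 1) * √(cRho ρ n) * r ^ n) :
    {a : ℕ → ℂ | ∃ z : ℂ, ‖z‖ ≤ r ∧ x < ‖fRho ρ a z‖} ⊆
      ⋃ n : ℕ, {a | x * (n + 1) / (∑' n : ℕ, (n + 1) * √(cRho ρ n) * r ^ n) < ‖a n‖} := by
  rintro a ⟨z, hz, hxz⟩
  by_contra hnot
  simp only [mem_iUnion, mem_ofPred_eq, not_exists, not_lt] at hnot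
  have := norm_fRho_le hsum (fun n => (hnot n).trans_eq (div_mul_eq_mul_div x _ _).symm) hz
  rw [div_mul_cancel₀ x hS.ne'] at this
  exact hxz.not_ge this

/-- For `y ≥ 1`, `y (n + 1)² ≥ y + n`, so the series is dominated by `exp (-y) ∑ 2⁻ⁿ`. -/
lemma tsum_ofReal_two_mul_exp_neg_mul_succ_sq_le {y : ℝ} (hy : 1 ≤ y) :
    ∑' n : ℕ, ENNReal.ofReal (2 * Real.exp (-(y * (n + 1) ^ 2))) ≤
      ENNReal.ofReal (4 * Real.exp (-y)) := by
  have hterm : ∀ n : ℕ, Real.exp (-(y * (n + 1) ^ 2)) ≤ Real.exp (-y) * (1 / 2) ^ n := by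
    intro n
    have hexp : Real.exp (-1) ≤ 1 / 2 := by
      rw [Real.exp_neg, one_div]
      exact inv_anti₀ two_pos (by linarith [Real.add_one_le_exp (1 : ℝ)])
    calc Real.exp (-(y * (n + 1) ^ 2)) ≤ Real.exp (-y + n * (-1)) := by
          gcongr
          nlinarith [mul_le_mul_of_nonneg_right hy (by positivity : (0 : ℝ) ≤ n ^ 2 + 2 * n)]
      _ = Real.exp (-y) * Real.exp (-1) ^ n := by rw [Real.exp_add, Real.exp_nat_mul]
      _ ≤ Real.exp (-y) * (1 / 2) ^ n := by gcongr
  calc ∑' n : ℕ, ENNReal.ofReal (2 * Real.exp (-(y * (n + 1) ^ 2)))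
      ≤ ∑' n : ℕ, ENNReal.ofReal (2 * Real.exp (-y) * (1 / 2) ^ n) :=
        ENNReal.tsum_le_tsum fun n => ENNReal.ofReal_le_ofReal (by linarith [hterm n])
    _ = ENNReal.ofReal (∑' n : ℕ, 2 * Real.exp (-y) * (1 / 2) ^ n) :=
        (ENNReal.ofReal_tsum_of_nonneg (fun n => by positivity)
          (summable_geometric_two.mul_left _)).symm
    _ = ENNReal.ofReal (4 * Real.exp (-y)) := by
        rw [tsum_mul_left, tsum_geometric_two]
        ring_nf

/-- Lemma 6.2 (maximum modulus tail bound): for fixed `r < 1` there are `c, γ > 0` with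
`P(max_{|z| ≤ r} |f_{a,ρ}(z)| > x) ≤ c e^{-γx²}` for all `x > 0`. -/
theorem max_modulus_tail (P : Measure (ℕ → ℂ)) (hP : IsGaussianSeqMeasure P)
    (ρ : ℝ) (hρ : 0 < ρ) (r : ℝ) (hr : r ∈ Set.Ioo (0 : ℝ) 1) :
    ∃ c : ℝ, 0 < c ∧ ∃ γ : ℝ, 0 < γ ∧
      ∀ x : ℝ, 0 < x →
        P {a | ∃ z : ℂ, ‖z‖ ≤ r ∧ x < ‖fRho ρ a z‖} ≤
          ENNReal.ofReal (c * Real.exp (-γ * x ^ 2)) := by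
  have := hP.1
  have hsum := summable_succ_mul_sqrt_cRho_mul_pow hρ hr.1 hr.2
  set S := ∑' n : ℕ, (n + 1) * √(cRho ρ n) * r ^ n
  have hS : 0 < S := hsum.tsum_pos (fun n => mul_nonneg (by positivity) (pow_nonneg hr.1.le n)) 0
    (by simp [cRho])
  set γ : ℝ := 1 / (2 * S ^ 2) with hγ
  refine ⟨4, four_pos, γ, by positivity, fun x hx => ?_⟩
  rcases le_or_gt (γ * x ^ 2) 1 with hsmall | hlarge
  · refine prob_le_one.trans (ENNReal.one_le_ofReal.2 ?_)
    have hexp : Real.exp (-1) ≤ Real.exp (-γ * x ^ 2) := by gcongr; linarith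
    have he : 1 ≤ 4 * Real.exp (-1) := by
      rw [Real.exp_neg, le_mul_inv_iff₀ (Real.exp_pos 1)]
      linarith [Real.exp_one_lt_d9]
    linarith
  calc P {a | ∃ z : ℂ, ‖z‖ ≤ r ∧ x < ‖fRho ρ a z‖}
      ≤ ∑' n : ℕ, P {a | x * (n + 1) / S < ‖a n‖} :=
        (measure_mono (setOf_lt_norm_fRho_subset_iUnion hsum hS)).trans (measure_iUnion_le _)
    _ ≤ ∑' n : ℕ, ENNReal.ofReal (2 * Real.exp (-(γ * x ^ 2 * (n + 1) ^ 2))) := by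
        refine ENNReal.tsum_le_tsum fun n => ?_
        refine (hP.measure_eval_mem n (measurableSet_lt measurable_const measurable_norm)).trans_le
          ((gaussianC_setOf_lt_norm_le (by positivity)).trans_eq ?_)
        rw [hγ]
        congr 3
        field_simp
    _ ≤ ENNReal.ofReal (4 * Real.exp (-γ * x ^ 2)) := by
        rw [neg_mul]
        exact tsum_ofReal_two_mul_exp_neg_mul_succ_sq_le hlarge.le
end
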